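/- arXiv:2509.22916 — 9 statements merged into one kernel-verified Lean document; each statement's English description precedes it below -/
import Mathlib

section
/- Blip-down lemma (point exposure case): Under consistency (Y(a)=Y whenever A=a) and the MTP exchangeability assumption E[Y(a')|A=a,L=l]=E[Y(a')|A=a',L=l] for a'=g(a,l), the conditional MTP effect satisfies E[Y(g)|A=a,L=l]=E[Y|A=g(a,l),L=l], and hence the blip gamma^g(l,a):=E[Y-Y(g(l,a))|A=a,L=l] equals E[Y|A=a,L=l]-E[Y|A=g(a,l),L=l]. -/
open scoped Classical

/-- Probability of an event under weight function `p` on a finite outcome space. -/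
noncomputable def pr {Ω : Type*} [Fintype Ω] (p : Ω → ℝ) (S : Set Ω) : ℝ :=
  ∑ ω, if ω ∈ S then p ω else 0

/-- Conditional expectation of `X` given the event `S` (elementary, finite setting). -/
noncomputable def cexp {Ω : Type*} [Fintype Ω] (p : Ω → ℝ) (X : Ω → ℝ) (S : Set Ω) : ℝ :=
  (∑ ω, if ω ∈ S then p ω * X ω else 0) / pr p S

/-- Point-exposure blip-down lemma: under consistency, positivity and MTP
exchangeability, `E[Y(g)|A=a,L=l] = E[Y|A=g(a,l),L=l]`, and hence the blip
`γ^g(l,a) = E[Y - Y(g(a,l))|A=a,L=l]` equals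
`E[Y|A=a,L=l] - E[Y|A=g(a,l),L=l]`. -/
theorem stmt0
    {Ω 𝒜 𝓛 : Type*} [Fintype Ω]
    (p : Ω → ℝ) (hp : ∀ ω, 0 ≤ p ω) (hp1 : ∑ ω, p ω = 1)
    (A : Ω → 𝒜) (L : Ω → 𝓛) (Y : Ω → ℝ) (Ypot : 𝒜 → Ω → ℝ)
    (g : 𝒜 → 𝓛 → 𝒜)
    (hcons : ∀ a ω, A ω = a → Ypot a ω = Y ω)
    (hpos : ∀ a l, 0 < pr p {ω | A ω = a ∧ L ω = l} →
      0 < pr p {ω | A ω = g a l ∧ L ω = l})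
    (hexch : ∀ a l, 0 < pr p {ω | A ω = a ∧ L ω = l} →
      cexp p (Ypot (g a l)) {ω | A ω = a ∧ L ω = l}
        = cexp p (Ypot (g a l)) {ω | A ω = g a l ∧ L ω = l}) :
    ∀ a l, 0 < pr p {ω | A ω = a ∧ L ω = l} →
      cexp p (Ypot (g a l)) {ω | A ω = a ∧ L ω = l}
          = cexp p Y {ω | A ω = g a l ∧ L ω = l} ∧
      cexp p (fun ω => Y ω - Ypot (g a l) ω) {ω | A ω = a ∧ L ω = l}
          = cexp p Y {ω | A ω = a ∧ L ω = l}
            - cexp p Y {ω | A ω = g a l ∧ L ω = l} := by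

  intro a l hpl
  have h1 : cexp p (Ypot (g a l)) {ω | A ω = g a l ∧ L ω = l}
      = cexp p Y {ω | A ω = g a l ∧ L ω = l} := by
    unfold cexp
    congr 1
    apply Finset.sum_congr rfl
    intro ω _
    by_cases h : ω ∈ {ω | A ω = g a l ∧ L ω = l}
    · simp only [h, if_true]
      rw [hcons (g a l) ω h.1]
    · simp [h]
  have hmain : cexp p (Ypot (g a l)) {ω | A ω = a ∧ L ω = l}
      = cexp p Y {ω | A ω = g a l ∧ L ω = l} := (hexch a l hpl).trans h1
  refine ⟨hmain, ?_⟩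
  have hsplit : cexp p (fun ω => Y ω - Ypot (g a l) ω) {ω | A ω = a ∧ L ω = l}
      = cexp p Y {ω | A ω = a ∧ L ω = l}
        - cexp p (Ypot (g a l)) {ω | A ω = a ∧ L ω = l} := by
    unfold cexp
    rw [div_sub_div_same]
    congr 1
    rw [← Finset.sum_sub_distrib]
    apply Finset.sum_congr rfl
    intro ω _
    by_cases h : ω ∈ {ω | A ω = a ∧ L ω = l} <;> simp [h, mul_sub]
  rw [hsplit, hmain]
end

section
/- If the blip functions gamma_j(H_j,A_j) := E[Y_k(Abar_j, g-after-j) - Y_k(Abar_{j-1}, g-after-(j-1)) | H_j, A_j] satisfy the SNMM definition, then stripping them away recovers counterfactual means: E[Y_k - sum_{j=t}^{k-1} gamma_j(H_j,A_j) | H_t, A_t] = E[Y_k(Abar_{t-1}, g-from-t) | H_t, A_t]. In particular, taking t=0 and marginalizing, E[Y_k(g)] = E[Y_k - sum_{j=0}^{k-1} gamma_j(H_j,A_j)]. -/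
open scoped Classical

lemma pr_mem_pos {Ω : Type*} [Fintype Ω] (p : Ω → ℝ) (hp : ∀ ω, 0 < p ω)
    (S : Set Ω) (ω0 : Ω) (h : ω0 ∈ S) : 0 < pr p S := by
  unfold pr
  have hle : (if ω0 ∈ S then p ω0 else 0) ≤ ∑ ω, if ω ∈ S then p ω else 0 :=
    Finset.single_le_sum (f := fun ω => if ω ∈ S then p ω else 0)
      (fun ω _ => by by_cases h : ω ∈ S <;> simp [h, (hp ω).le]) (Finset.mem_univ ω0)
  rw [if_pos h] at hle
  exact lt_of_lt_of_le (hp ω0) hle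

lemma tower {Ω ι : Type*} [Fintype Ω] (p : Ω → ℝ) (hp : ∀ ω, 0 < p ω)
    (g : Ω → ℝ) (f : Ω → ι) (S : Set Ω)
    (hS : ∀ ω ω', f ω = f ω' → (ω ∈ S ↔ ω' ∈ S)) :
    (∑ ω, if ω ∈ S then p ω * cexp p g {ω' | f ω' = f ω} else 0)
      = ∑ ω, if ω ∈ S then p ω * g ω else 0 := by
  have hD : ∀ ω, pr p {ω' | f ω' = f ω} ≠ 0 := fun ω =>
    (pr_mem_pos p hp {ω' | f ω' = f ω} ω (show f ω = f ω from rfl)).ne'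
  have h1 : ∀ ω, (if ω ∈ S then p ω * cexp p g {ω' | f ω' = f ω} else 0)
      = ∑ ω', if ω ∈ S ∧ f ω' = f ω then
          p ω * (p ω' * g ω') / pr p {a | f a = f ω} else 0 := by
    intro ω
    by_cases h : ω ∈ S
    · simp only [if_pos h, true_and, cexp, div_eq_mul_inv, Finset.sum_mul,
        Finset.mul_sum]
      apply Finset.sum_congr rfl
      intro ω' _
      by_cases hf : ω' ∈ {a | f a = f ω}
      · rw [if_pos hf, if_pos (⟨h, hf⟩ : ω ∈ S ∧ f ω' = f ω)]; ring
      · rw [if_neg hf, if_neg (fun hc : ω ∈ S ∧ f ω' = f ω => hf hc.2)]; ring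
    · simp [h]
  have h2 : ∀ ω', (∑ ω, if ω ∈ S ∧ f ω' = f ω then
        p ω * (p ω' * g ω') / pr p {a | f a = f ω} else 0)
      = if ω' ∈ S then p ω' * g ω' else 0 := by
    intro ω'
    have hterm : ∀ ω, (if ω ∈ S ∧ f ω' = f ω then
          p ω * (p ω' * g ω') / pr p {a | f a = f ω} else 0)
        = if f ω = f ω' then
            (if ω' ∈ S then p ω' * g ω' / pr p {a | f a = f ω'} else 0) * p ω
          else 0 := by
      intro ω
      by_cases hf : f ω = f ω'
      · have hfib : {a | f a = f ω} = {a | f a = f ω'} := by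
          ext a; simp [Set.mem_setOf_eq, hf]
        have hmem : ω ∈ S ↔ ω' ∈ S := hS ω ω' hf
        by_cases hS' : ω' ∈ S
        · rw [if_pos ⟨hmem.2 hS', hf.symm⟩, if_pos hf, if_pos hS', hfib]; ring
        · rw [if_neg (fun h => hS' (hmem.1 h.1)), if_pos hf, if_neg hS', zero_mul]
      · rw [if_neg (fun h => hf h.2.symm), if_neg hf]
    rw [Finset.sum_congr rfl (fun ω _ => hterm ω)]
    by_cases hS' : ω' ∈ S
    · simp only [if_pos hS']
      have hsum : (∑ ω, if f ω = f ω' then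
            p ω' * g ω' / pr p {a | f a = f ω'} * p ω else 0)
          = (p ω' * g ω' / pr p {a | f a = f ω'}) * pr p {a | f a = f ω'} := by
        rw [pr, Finset.mul_sum]
        apply Finset.sum_congr rfl
        intro ω _
        by_cases hf : f ω = f ω' <;> simp [hf, Set.mem_setOf_eq]
      rw [hsum, div_mul_cancel₀ _ (hD ω')]
    · simp [hS']
  calc (∑ ω, if ω ∈ S then p ω * cexp p g {ω' | f ω' = f ω} else 0)
      = ∑ ω, ∑ ω', if ω ∈ S ∧ f ω' = f ω then
          p ω * (p ω' * g ω') / pr p {a | f a = f ω} else 0 :=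
        Finset.sum_congr rfl (fun ω _ => h1 ω)
    _ = ∑ ω', ∑ ω, if ω ∈ S ∧ f ω' = f ω then
          p ω * (p ω' * g ω') / pr p {a | f a = f ω} else 0 := Finset.sum_comm
    _ = ∑ ω', if ω' ∈ S then p ω' * g ω' else 0 :=
        Finset.sum_congr rfl (fun ω' _ => h2 ω')

/-- Blip-down lemma (Lemma 1): `W j` denotes the counterfactual outcome
`Y_k(Ā_{j-1}, g-from-j)` (natural treatment through `j-1`, policy `g` thereafter),
so `W k = Y_k` by consistency.  `X j` encodes the observed history `(H_j, A_j)`,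
with histories nested over time.  If the blips
`γ_j = E[W_{j+1} - W_j | H_j, A_j]` satisfy the SNMM definition, then
`E[Y_k - ∑_{j=t}^{k-1} γ_j(H_j,A_j) | H_t, A_t] = E[Y_k(Ā_{t-1}, g-from-t)|H_t,A_t]`,
and in particular `E[Y_k(g)] = E[Y_k - ∑_{j=0}^{k-1} γ_j(H_j,A_j)]`. -/
theorem stmt1
    {Ω ι : Type*} [Fintype Ω]
    (p : Ω → ℝ) (hp : ∀ ω, 0 < p ω) (hp1 : ∑ ω, p ω = 1)
    (k : ℕ) (W : ℕ → Ω → ℝ) (Yk : Ω → ℝ)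
    (X : ℕ → Ω → ι)
    (hnest : ∀ i j : ℕ, i ≤ j → ∀ ω ω', X j ω = X j ω' → X i ω = X i ω')
    (hWk : ∀ ω, W k ω = Yk ω)
    (γ : ℕ → Ω → ℝ)
    (hγ : ∀ j ω, γ j ω =
      cexp p (fun ω' => W (j+1) ω' - W j ω') {ω' | X j ω' = X j ω}) :
    (∀ t ≤ k, ∀ ω,
      cexp p (fun ω' => Yk ω' - ∑ j ∈ Finset.Ico t k, γ j ω') {ω' | X t ω' = X t ω}
        = cexp p (W t) {ω' | X t ω' = X t ω}) ∧
    (∑ ω, p ω * (Yk ω - ∑ j ∈ Finset.Ico 0 k, γ j ω) = ∑ ω, p ω * W 0 ω) := by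
  -- main numerator identity
  have key : ∀ t ≤ k, ∀ ω, Yk ω - ∑ j ∈ Finset.Ico t k, γ j ω
      = W t ω + ∑ j ∈ Finset.Ico t k, ((W (j+1) ω - W j ω) - γ j ω) := by
    intro t ht ω
    have htel : ∑ j ∈ Finset.Ico t k, (W (j+1) ω - W j ω) = W k ω - W t ω := by
      refine Nat.le_induction ?_ ?_ k ht
      · simp
      · intro n hn ih
        rw [Finset.sum_Ico_succ_top hn, ih]; ring
    rw [Finset.sum_sub_distrib, htel, ← hWk ω]; ring
  have main : ∀ t ≤ k, ∀ S : Set Ω,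
      (∀ j ∈ Finset.Ico t k, ∀ ω ω', X j ω = X j ω' → (ω ∈ S ↔ ω' ∈ S)) →
      (∑ ω, if ω ∈ S then p ω * (Yk ω - ∑ j ∈ Finset.Ico t k, γ j ω) else 0)
        = ∑ ω, if ω ∈ S then p ω * W t ω else 0 := by
    intro t ht S hS
    have step1 : (∑ ω, if ω ∈ S then p ω * (Yk ω - ∑ j ∈ Finset.Ico t k, γ j ω) else 0)
        = ∑ ω, ((if ω ∈ S then p ω * W t ω else 0)
          + ∑ j ∈ Finset.Ico t k, (if ω ∈ S then
              p ω * ((W (j+1) ω - W j ω) - γ j ω) else 0)) := by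
      apply Finset.sum_congr rfl
      intro ω _
      by_cases h : ω ∈ S
      · simp only [if_pos h, key t ht ω, mul_add, Finset.mul_sum]
      · simp [h]
    rw [step1, Finset.sum_add_distrib]
    have hzero : ∀ j ∈ Finset.Ico t k,
        (∑ ω, if ω ∈ S then p ω * ((W (j+1) ω - W j ω) - γ j ω) else 0) = 0 := by
      intro j hj
      have hsplit : ∀ ω, (if ω ∈ S then p ω * ((W (j+1) ω - W j ω) - γ j ω) else 0)
          = (if ω ∈ S then p ω * (W (j+1) ω - W j ω) else 0)
            - (if ω ∈ S then p ω * γ j ω else 0) := by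
        intro ω; by_cases h : ω ∈ S <;> simp [h, mul_sub]
      rw [Finset.sum_congr rfl (fun ω _ => hsplit ω), Finset.sum_sub_distrib]
      have hg : (∑ ω, if ω ∈ S then p ω * γ j ω else 0)
          = ∑ ω, if ω ∈ S then p ω * (W (j+1) ω - W j ω) else 0 := by
        have := tower p hp (fun ω' => W (j+1) ω' - W j ω') (X j) S (hS j hj)
        calc (∑ ω, if ω ∈ S then p ω * γ j ω else 0)
            = ∑ ω, if ω ∈ S then
                p ω * cexp p (fun ω' => W (j+1) ω' - W j ω') {ω' | X j ω' = X j ω}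
              else 0 :=
              Finset.sum_congr rfl (fun ω _ => by rw [hγ j ω])
          _ = ∑ ω, if ω ∈ S then p ω * (W (j+1) ω - W j ω) else 0 := this
      rw [hg, sub_self]
    rw [Finset.sum_comm, Finset.sum_eq_zero hzero, add_zero]
  constructor
  · intro t ht ω0
    simp only [cexp]
    have h := main t ht {ω' | X t ω' = X t ω0}
      (fun j hj ω ω' hx => by
        have := hnest t j (Finset.mem_Ico.mp hj).1 ω ω' hx
        simp only [Set.mem_setOf_eq, this])
    rw [h]
  · have h := main 0 (Nat.zero_le k) Set.univ (fun j _ ω ω' _ => Iff.rfl)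
    simpa using h
end

section
/- Adjoint operator for a many-to-one policy with discrete treatment: if A is discrete with conditional probability mass function pi(a|l)>0 and g(.,l) is a possibly many-to-one map, then the adjoint of (T_g h)(l,a)=h(l,g(a,l)) with respect to the inner product <u,v>_w = E[sum_a u(L,a)v(L,a)pi(a|L)] is (T_g^† q)(l,a) = sum_{a': g(a',l)=a} q(l,a') pi(a'|l)/pi(a|l), meaning <q, T_g h>_w = <T_g^† q, h>_w for all q,h. -/
open scoped Classical

/-- Adjoint operator for a (possibly many-to-one) policy with discrete treatment:
with `π(a|l) > 0` the conditional pmf of `A` given `L=l`, the adjoint of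
`(T_g h)(l,a) = h(l, g(l,a))` with respect to
`⟪u,v⟫_w = E[∑_a u(L,a) v(L,a) π(a|L)]` is
`(T_g^† q)(l,a) = ∑_{a' : g(l,a')=a} q(l,a') π(a'|l)/π(a|l)`, i.e.
`⟪q, T_g h⟫_w = ⟪T_g^† q, h⟫_w` for all `q, h`. -/
theorem stmt4
    {𝓛 𝒜 : Type*} [Fintype 𝓛] [Fintype 𝒜]
    (pL : 𝓛 → ℝ) (hpL : ∀ l, 0 ≤ pL l) (hpL1 : ∑ l, pL l = 1)
    (π : 𝓛 → 𝒜 → ℝ) (hπ : ∀ l a, 0 < π l a) (hπ1 : ∀ l, ∑ a, π l a = 1)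
    (g : 𝓛 → 𝒜 → 𝒜) (q h : 𝓛 → 𝒜 → ℝ) :
    (∑ l, pL l * ∑ a, q l a * h l (g l a) * π l a)
      = ∑ l, pL l * ∑ a,
          (∑ a', if g l a' = a then q l a' * π l a' / π l a else 0) * h l a * π l a := by
  refine Finset.sum_congr rfl fun l _ => ?_
  congr 1
  have key : ∀ a : 𝒜,
      (∑ a', if g l a' = a then q l a' * π l a' / π l a else 0) * h l a * π l a
        = ∑ a', if g l a' = a then q l a' * h l a * π l a' else 0 := by
    intro a
    rw [Finset.sum_mul, Finset.sum_mul]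
    refine Finset.sum_congr rfl fun a' _ => ?_
    split
    · field_simp [(hπ l a).ne']
    · simp
  simp_rw [key]
  rw [Finset.sum_comm]
  refine Finset.sum_congr rfl fun a' _ => ?_
  simp
end

section
/- Mean-zero identification of the orthogonal point-exposure score: under consistency, positivity, and MTP exchangeability, with mu(a,l)=E[Y|A=a,L=l], gamma_g(l,a;psi*) the true blip function satisfying gamma_g(l,a;psi*)=mu(a,l)-mu(g(a,l),l), and tilde q the adjoint pullback of q, the score phi(O;psi*,eta*) = (q-tilde q)(Y-mu(A,L)) + q{mu(A,L)-mu(g(A,L),L)-gamma_g(L,A;psi*)} has expectation zero. -/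
open scoped Classical

lemma pr_pos' {Ω : Type*} [Fintype Ω] (p : Ω → ℝ) (hp : ∀ ω, 0 < p ω)
    (S : Set Ω) (ω0 : Ω) (h0 : ω0 ∈ S) : 0 < pr p S := by
  have hle : p ω0 ≤ pr p S := by
    unfold pr
    have := Finset.single_le_sum (f := fun ω => if ω ∈ S then p ω else 0)
      (fun i _ => by by_cases h : i ∈ S <;> simp [h, (hp i).le]) (Finset.mem_univ ω0)
    simpa [h0] using this
  linarith [hp ω0]

lemma key_zero {Ω 𝒜 𝓛 : Type*} [Fintype Ω] (p : Ω → ℝ) (hp : ∀ ω, 0 < p ω)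
    (A : Ω → 𝒜) (L : Ω → 𝓛) (Y f : Ω → ℝ)
    (hf : ∀ ω ω', A ω = A ω' → L ω = L ω' → f ω = f ω') :
    ∑ ω, p ω * (f ω * (Y ω - cexp p Y {ω' | A ω' = A ω ∧ L ω' = L ω})) = 0 := by
  set S : Ω → Set Ω := fun ω => {ω' | A ω' = A ω ∧ L ω' = L ω} with hS
  set C : Ω → ℝ := fun ω => pr p (S ω) with hC
  have hCpos : ∀ ω, 0 < C ω := fun ω => pr_pos' p hp _ ω ⟨rfl, rfl⟩
  have hmem : ∀ {ω ω'}, ω' ∈ S ω → (A ω' = A ω ∧ L ω' = L ω) := fun h => h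
  have hSeq : ∀ ω ω', ω' ∈ S ω → S ω = S ω' := by
    intro ω ω' h
    obtain ⟨h1, h2⟩ := hmem h
    simp only [hS]
    ext x
    simp [h1, h2]
  have hsymm : ∀ ω ω', ω' ∈ S ω → ω ∈ S ω' := by
    intro ω ω' h
    obtain ⟨h1, h2⟩ := hmem h
    exact ⟨h1.symm, h2.symm⟩
  have hmain : ∑ ω, p ω * (f ω * cexp p Y (S ω)) = ∑ ω, p ω * (f ω * Y ω) := by
    calc ∑ ω, p ω * (f ω * cexp p Y (S ω))
        = ∑ ω, ∑ ω', if ω' ∈ S ω then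
            p ω * f ω / C ω * (p ω' * Y ω') else 0 := by
          refine Finset.sum_congr rfl fun ω _ => ?_
          simp only [cexp, ← hC]
          have hterm : ∀ ω', (if ω' ∈ S ω then p ω * f ω / C ω * (p ω' * Y ω') else 0)
              = (p ω * f ω / C ω) * (if ω' ∈ S ω then p ω' * Y ω' else 0) := by
            intro ω'; by_cases h : ω' ∈ S ω <;> simp [h]
          rw [Finset.sum_congr rfl fun ω' _ => hterm ω', ← Finset.mul_sum]
          simp only [hC]; ring
      _ = ∑ ω', ∑ ω, if ω' ∈ S ω then
            p ω * f ω / C ω * (p ω' * Y ω') else 0 := Finset.sum_comm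
      _ = ∑ ω', ∑ ω, (f ω' * (p ω' * Y ω') / C ω') *
            (if ω ∈ S ω' then p ω else 0) := by
          refine Finset.sum_congr rfl fun ω' _ => Finset.sum_congr rfl fun ω _ => ?_
          by_cases h : ω' ∈ S ω
          · obtain ⟨h1, h2⟩ := hmem h
            have hfe : f ω = f ω' := hf ω ω' h1.symm h2.symm
            have hce : C ω = C ω' := by simp only [hC]; rw [hSeq ω ω' h]
            rw [if_pos h, if_pos (hsymm ω ω' h), hfe, hce]
            ring
          · rw [if_neg h, if_neg (fun h' => h (hsymm ω' ω h')), mul_zero]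
      _ = ∑ ω', (f ω' * (p ω' * Y ω') / C ω') * C ω' := by
          refine Finset.sum_congr rfl fun ω' _ => ?_
          have hsum : (∑ i, if i ∈ S ω' then p i else 0) = C ω' := by
            simp only [hC, pr]
            exact Finset.sum_congr rfl fun i _ => by
              by_cases h : i ∈ S ω' <;> simp [h]
          rw [← Finset.mul_sum, hsum]
      _ = ∑ ω', p ω' * (f ω' * Y ω') := by
          refine Finset.sum_congr rfl fun ω' _ => ?_
          field_simp [(hCpos ω').ne']
  have hsplit : ∑ ω, p ω * (f ω * (Y ω - cexp p Y (S ω)))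
      = ∑ ω, p ω * (f ω * Y ω) - ∑ ω, p ω * (f ω * cexp p Y (S ω)) := by
    rw [← Finset.sum_sub_distrib]
    exact Finset.sum_congr rfl fun ω _ => by ring
  show ∑ ω, p ω * (f ω * (Y ω - cexp p Y (S ω))) = 0
  rw [hsplit, hmain, sub_self]

/-- Mean-zero identification of the orthogonal point-exposure score:
with `μ(a,l) = E[Y|A=a,L=l]`, a correctly specified blip
`γ_g(l,a;ψ*) = μ(a,l) - μ(g(a,l),l)`, and `q̃` the adjoint pullback of `q`
(satisfying `E[q(A,L) h(g(A,L),L)] = E[q̃(A,L) h(A,L)]` for all `h`), the score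
`φ = (q - q̃)(Y - μ(A,L)) + q{μ(A,L) - μ(g(A,L),L) - γ_g(L,A;ψ*)}`
has expectation zero. -/
theorem stmt5
    {Ω 𝒜 𝓛 : Type*} [Fintype Ω]
    (p : Ω → ℝ) (hp : ∀ ω, 0 < p ω) (hp1 : ∑ ω, p ω = 1)
    (A : Ω → 𝒜) (L : Ω → 𝓛) (Y : Ω → ℝ) (g : 𝒜 → 𝓛 → 𝒜)
    (μ : 𝒜 → 𝓛 → ℝ)
    (hμ : ∀ a l, μ a l = cexp p Y {ω | A ω = a ∧ L ω = l})
    (γ : 𝓛 → 𝒜 → ℝ)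
    (hγ : ∀ a l, γ l a = μ a l - μ (g a l) l)
    (q qt : 𝒜 → 𝓛 → ℝ)
    (hadj : ∀ h : 𝒜 → 𝓛 → ℝ,
      ∑ ω, p ω * (q (A ω) (L ω) * h (g (A ω) (L ω)) (L ω))
        = ∑ ω, p ω * (qt (A ω) (L ω) * h (A ω) (L ω))) :
    ∑ ω, p ω *
      ((q (A ω) (L ω) - qt (A ω) (L ω)) * (Y ω - μ (A ω) (L ω))
        + q (A ω) (L ω)
            * (μ (A ω) (L ω) - μ (g (A ω) (L ω)) (L ω) - γ (L ω) (A ω))) = 0 := by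
  have h1 : ∀ ω, p ω *
      ((q (A ω) (L ω) - qt (A ω) (L ω)) * (Y ω - μ (A ω) (L ω))
        + q (A ω) (L ω)
            * (μ (A ω) (L ω) - μ (g (A ω) (L ω)) (L ω) - γ (L ω) (A ω)))
      = p ω * ((q (A ω) (L ω) - qt (A ω) (L ω)) * (Y ω - μ (A ω) (L ω))) := by
    intro ω; rw [hγ]; ring
  rw [Finset.sum_congr rfl fun ω _ => h1 ω]
  have h2 : ∀ ω, μ (A ω) (L ω) = cexp p Y {ω' | A ω' = A ω ∧ L ω' = L ω} :=
    fun ω => hμ (A ω) (L ω)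
  calc ∑ ω, p ω * ((q (A ω) (L ω) - qt (A ω) (L ω)) * (Y ω - μ (A ω) (L ω)))
      = ∑ ω, p ω * ((q (A ω) (L ω) - qt (A ω) (L ω))
          * (Y ω - cexp p Y {ω' | A ω' = A ω ∧ L ω' = L ω})) := by
        exact Finset.sum_congr rfl fun ω _ => by rw [h2]
    _ = 0 := key_zero p hp A L Y (fun ω => q (A ω) (L ω) - qt (A ω) (L ω))
          (fun ω ω' ha hl => by simp only [ha, hl])
end

section
/- Neyman orthogonality of the point-exposure score in the outcome regression: fix pi and the adjoint tilde q at the truth, and perturb mu_t = mu* + t*dmu. Then d/dt at t=0 of E[(q-tilde q)(Y-mu_t(A,L)) + q{mu_t(A,L)-mu_t(g(A,L),L)-gamma_g(L,A;psi*)}] equals zero, because the derivative of the first term is -<q-tilde q, dmu>_w and the derivative of the second term is +<q-tilde q, dmu>_w by the adjoint identity, and they cancel. -/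
/-- Neyman orthogonality of the point-exposure score in the outcome regression:
for any perturbation direction `dμ`, by the adjoint identity
`E[q(A,L) dμ(A,L)] - E[q(A,L) dμ(g(A,L),L)] = E[(q - q̃)(A,L) dμ(A,L)]`,
so the pathwise derivative of the score expectation in `μ` vanishes:
the derivative `-⟪q-q̃, dμ⟫_w` of the augmentation term cancels the derivative
`+⟪q-q̃, dμ⟫_w` of the identifying term. -/
theorem stmt6
    {Ω 𝒜 𝓛 : Type*} [Fintype Ω]
    (p : Ω → ℝ)
    (A : Ω → 𝒜) (L : Ω → 𝓛) (g : 𝒜 → 𝓛 → 𝒜)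
    (q qt : 𝒜 → 𝓛 → ℝ)
    (hadj : ∀ h : 𝒜 → 𝓛 → ℝ,
      ∑ ω, p ω * (q (A ω) (L ω) * h (g (A ω) (L ω)) (L ω))
        = ∑ ω, p ω * (qt (A ω) (L ω) * h (A ω) (L ω))) :
    ∀ dμ : 𝒜 → 𝓛 → ℝ,
      (-(∑ ω, p ω * ((q (A ω) (L ω) - qt (A ω) (L ω)) * dμ (A ω) (L ω)))
        + ∑ ω, p ω * (q (A ω) (L ω)
            * (dμ (A ω) (L ω) - dμ (g (A ω) (L ω)) (L ω))) = 0)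
      ∧ (∑ ω, p ω * (q (A ω) (L ω) * dμ (A ω) (L ω))
          - ∑ ω, p ω * (q (A ω) (L ω) * dμ (g (A ω) (L ω)) (L ω))
          = ∑ ω, p ω * ((q (A ω) (L ω) - qt (A ω) (L ω)) * dμ (A ω) (L ω))) := by
  intro dμ
  have h := hadj dμ
  constructor
  · rw [show (0:ℝ) = -(∑ ω, p ω * (q (A ω) (L ω) * dμ (g (A ω) (L ω)) (L ω))) + ∑ ω, p ω * (qt (A ω) (L ω) * dμ (A ω) (L ω)) by rw [h]; ring]
    rw [← Finset.sum_neg_distrib, ← Finset.sum_add_distrib, ← Finset.sum_neg_distrib, ← Finset.sum_add_distrib]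
    exact Finset.sum_congr rfl fun ω _ => by ring
  · rw [h, ← Finset.sum_sub_distrib]
    exact Finset.sum_congr rfl fun ω _ => by ring
end

section
/- Point exposure parallel-trends identification of the MTP blip: under the MTP parallel trends assumption E[Y_1(g(a,l)) - Y_0 | A=a, L=l] = E[Y_1(g(a,l)) - Y_0 | A=g(a,l), L=l] for all (a,l) with positive probability, together with consistency, the blip gamma^g(l,a):=E[Y_1 - Y_1(g(a,l)) | A=a, L=l] is identified as gamma^g(l,a) = E[Y_1-Y_0|A=a,L=l] - E[Y_1-Y_0|A=g(a,l),L=l]. -/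
open scoped Classical

lemma cexp_sub' {Ω : Type*} [Fintype Ω] (p : Ω → ℝ) (X Y : Ω → ℝ) (S : Set Ω) :
    cexp p (fun ω => X ω - Y ω) S = cexp p X S - cexp p Y S := by
  unfold cexp
  rw [div_sub_div_same]
  congr 1
  rw [← Finset.sum_sub_distrib]
  apply Finset.sum_congr rfl
  intro ω _
  by_cases h : ω ∈ S <;> simp [h, mul_sub]

lemma cexp_congr' {Ω : Type*} [Fintype Ω] (p : Ω → ℝ) (X Y : Ω → ℝ) (S : Set Ω)
    (h : ∀ ω ∈ S, X ω = Y ω) : cexp p X S = cexp p Y S := by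
  unfold cexp
  congr 1
  apply Finset.sum_congr rfl
  intro ω _
  by_cases hω : ω ∈ S <;> simp [hω, h ω]


/-- Point-exposure parallel-trends identification of the MTP blip: under the MTP
parallel trends assumption
`E[Y₁(g(a,l)) - Y₀ | A=a, L=l] = E[Y₁(g(a,l)) - Y₀ | A=g(a,l), L=l]`,
consistency and positivity, the blip `γ^g(l,a) = E[Y₁ - Y₁(g(a,l)) | A=a, L=l]`
is identified as `E[Y₁-Y₀|A=a,L=l] - E[Y₁-Y₀|A=g(a,l),L=l]`. -/
theorem stmt8
    {Ω 𝒜 𝓛 : Type*} [Fintype Ω]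
    (p : Ω → ℝ) (hp : ∀ ω, 0 ≤ p ω) (hp1 : ∑ ω, p ω = 1)
    (A : Ω → 𝒜) (L : Ω → 𝓛) (Y0 Y1 : Ω → ℝ) (Y1pot : 𝒜 → Ω → ℝ)
    (g : 𝒜 → 𝓛 → 𝒜)
    (hcons : ∀ a ω, A ω = a → Y1pot a ω = Y1 ω)
    (hpos : ∀ a l, 0 < pr p {ω | A ω = a ∧ L ω = l} →
      0 < pr p {ω | A ω = g a l ∧ L ω = l})
    (hPT : ∀ a l, 0 < pr p {ω | A ω = a ∧ L ω = l} →
      cexp p (fun ω => Y1pot (g a l) ω - Y0 ω) {ω | A ω = a ∧ L ω = l}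
        = cexp p (fun ω => Y1pot (g a l) ω - Y0 ω) {ω | A ω = g a l ∧ L ω = l}) :
    ∀ a l, 0 < pr p {ω | A ω = a ∧ L ω = l} →
      cexp p (fun ω => Y1 ω - Y1pot (g a l) ω) {ω | A ω = a ∧ L ω = l}
        = cexp p (fun ω => Y1 ω - Y0 ω) {ω | A ω = a ∧ L ω = l}
          - cexp p (fun ω => Y1 ω - Y0 ω) {ω | A ω = g a l ∧ L ω = l} := by
  intro a l hal
  have hgl := hpos a l hal
  have h1 : cexp p (fun ω => Y1 ω - Y1pot (g a l) ω) {ω | A ω = a ∧ L ω = l}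
      = cexp p (fun ω => Y1 ω - Y0 ω) {ω | A ω = a ∧ L ω = l}
        - cexp p (fun ω => Y1pot (g a l) ω - Y0 ω) {ω | A ω = a ∧ L ω = l} := by
    rw [cexp_sub', cexp_sub', cexp_sub']; ring
  rw [h1, hPT a l hal]
  congr 1
  apply cexp_congr'
  intro ω hω
  rw [hcons (g a l) ω hω.1]
end

section
/- Two-time-point identification of the long-run blip under exchangeability: gamma_{02}^g(a_0,l_0) := E[Y_2(a_0,g_1)-Y_2(g_0,g_1)|A_0=a_0,L_0=l_0] is identified, with first term E[Y_2(a_0,g_1)|A_0=a_0,L_0=l_0] = E[Y_2 - gamma_{12}^g(H_1,A_1) | A_0=a_0, L_0=l_0] (via the blip-down lemma for time 1) and second term identified by the extended g-formula as mu_{02}(l_0,g(l_0,a_0)) = sum_{l_1,a_1} E[Y_2|L_0=l_0,A_0=g(l_0,a_0),L_1=l_1,A_1=g(l_0,g(l_0,a_0),l_1,a_1)] p(l_1|L_0=l_0,A_0=g(l_0,a_0)) p(a_1|L_0=l_0,L_1=l_1,A_0=g(l_0,a_0)). -/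
open scoped Classical

noncomputable def num {Ω : Type*} [Fintype Ω] (p X : Ω → ℝ) (S : Set Ω) : ℝ :=
  ∑ ω, if ω ∈ S then p ω * X ω else 0

lemma cexp_eq {Ω : Type*} [Fintype Ω] (p X : Ω → ℝ) (S : Set Ω) :
    cexp p X S = num p X S / pr p S := rfl

lemma num_sub {Ω : Type*} [Fintype Ω] (p X Y : Ω → ℝ) (S : Set Ω) :
    num p (fun ω => X ω - Y ω) S = num p X S - num p Y S := by
  unfold num
  rw [← Finset.sum_sub_distrib]
  refine Finset.sum_congr rfl fun ω _ => ?_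
  by_cases h : ω ∈ S
  · rw [if_pos h, if_pos h, if_pos h, mul_sub]
  · rw [if_neg h, if_neg h, if_neg h, sub_zero]

lemma num_congr {Ω : Type*} [Fintype Ω] (p X Y : Ω → ℝ) (S : Set Ω)
    (h : ∀ ω ∈ S, X ω = Y ω) : num p X S = num p Y S := by
  unfold num
  refine Finset.sum_congr rfl fun ω _ => ?_
  by_cases hm : ω ∈ S
  · rw [if_pos hm, if_pos hm, h ω hm]
  · rw [if_neg hm, if_neg hm]

lemma not_mem_of_pr_zero {Ω : Type*} [Fintype Ω] {p : Ω → ℝ} (hp : ∀ ω, 0 < p ω)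
    {S : Set Ω} (hz : pr p S = 0) : ∀ ω, ω ∉ S := by
  intro ω hmem
  unfold pr at hz
  have hnn : ∀ ω' ∈ Finset.univ, (0:ℝ) ≤ if ω' ∈ S then p ω' else 0 := by
    intro ω' _
    split
    · exact (hp ω').le
    · exact le_refl 0
  have := (Finset.sum_eq_zero_iff_of_nonneg hnn).mp hz ω (Finset.mem_univ ω)
  rw [if_pos hmem] at this
  exact (hp ω).ne' this

lemma num_empty {Ω : Type*} [Fintype Ω] (p X : Ω → ℝ) {S : Set Ω}
    (h : ∀ ω, ω ∉ S) : num p X S = 0 := by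
  unfold num
  exact Finset.sum_eq_zero fun ω _ => if_neg (h ω)

lemma num_split {Ω I J : Type*} [Fintype Ω] [Fintype I] [Fintype J]
    (p X : Ω → ℝ) (S : Set Ω) (T : I → J → Set Ω)
    (key : ∀ ω : Ω, ∃ i0 j0, (ω ∈ S → ω ∈ T i0 j0) ∧
      ∀ i j, ω ∈ T i j → i = i0 ∧ j = j0 ∧ ω ∈ S) :
    num p X S = ∑ i, ∑ j, num p X (T i j) := by
  unfold num
  have hpt : ∀ ω : Ω, (if ω ∈ S then p ω * X ω else 0)
      = ∑ i, ∑ j, if ω ∈ T i j then p ω * X ω else 0 := by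
    intro ω
    obtain ⟨i0, j0, hfw, hbk⟩ := key ω
    by_cases h : ω ∈ S
    · rw [if_pos h, Finset.sum_eq_single i0]
      · rw [Finset.sum_eq_single j0]
        · rw [if_pos (hfw h)]
        · intro j _ hne
          exact if_neg fun hm => hne (hbk i0 j hm).2.1
        · intro habs
          exact absurd (Finset.mem_univ _) habs
      · intro i _ hne
        exact Finset.sum_eq_zero fun j _ => if_neg fun hm => hne (hbk i j hm).1
      · intro habs
        exact absurd (Finset.mem_univ _) habs
    · rw [if_neg h]
      exact (Finset.sum_eq_zero fun i _ =>
        Finset.sum_eq_zero fun j _ => if_neg fun hm => h (hbk i j hm).2.2).symm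
  have h1 : (∑ ω, if ω ∈ S then p ω * X ω else 0)
      = ∑ ω, ∑ i, ∑ j, if ω ∈ T i j then p ω * X ω else 0 :=
    Finset.sum_congr rfl fun ω _ => hpt ω
  rw [h1, Finset.sum_comm]
  exact Finset.sum_congr rfl fun i _ => Finset.sum_comm

/-- Two-time-point identification of the long-run blip under exchangeability.
`Y2n = Y₂(A₀, g₁)` (observed treatment at time 0, policy thereafter) and
`Y2g = Y₂(g₀, g₁)`.  Given the identified one-step blip
`γ₁₂(h₁,a₁) = μ₁₂(h₁,a₁) - μ₁₂(h₁,g₁(h₁,a₁))`, the time-1 blip-down premise,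
and the extended g-formula premise for the joint intervention,
`γ₀₂(a₀,l₀) = E[Y2n - Y2g | A₀=a₀, L₀=l₀]` is identified as
`E[Y₂ - γ₁₂(H₁,A₁) | A₀=a₀, L₀=l₀] - μ₀₂(l₀, g₀(l₀,a₀))` with `μ₀₂` the
extended g-formula functional. -/
theorem stmt9
    {Ω 𝒜 𝓛0 𝓛1 : Type*} [Fintype Ω] [Fintype 𝒜] [Fintype 𝓛1]
    (p : Ω → ℝ) (hp : ∀ ω, 0 < p ω) (hp1 : ∑ ω, p ω = 1)
    (L0 : Ω → 𝓛0) (A0 : Ω → 𝒜) (L1 : Ω → 𝓛1) (A1 : Ω → 𝒜) (Y2 : Ω → ℝ)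
    (g0 : 𝓛0 → 𝒜 → 𝒜) (g1 : 𝓛0 → 𝒜 → 𝓛1 → 𝒜 → 𝒜)
    (Y2n Y2g : Ω → ℝ)
    (μ12 : 𝓛0 → 𝒜 → 𝓛1 → 𝒜 → ℝ)
    (hμ12 : ∀ l0 a0 l1 a1, μ12 l0 a0 l1 a1 =
      cexp p Y2 {ω | L0 ω = l0 ∧ A0 ω = a0 ∧ L1 ω = l1 ∧ A1 ω = a1})
    (γ12 : 𝓛0 → 𝒜 → 𝓛1 → 𝒜 → ℝ)
    (hγ12 : ∀ l0 a0 l1 a1, γ12 l0 a0 l1 a1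
      = μ12 l0 a0 l1 a1 - μ12 l0 a0 l1 (g1 l0 a0 l1 a1))
    (hblip1 : ∀ l0 a0 l1 a1,
      cexp p Y2n {ω | L0 ω = l0 ∧ A0 ω = a0 ∧ L1 ω = l1 ∧ A1 ω = a1}
        = cexp p (fun ω => Y2 ω - γ12 l0 a0 l1 a1)
            {ω | L0 ω = l0 ∧ A0 ω = a0 ∧ L1 ω = l1 ∧ A1 ω = a1})
    (hgform : ∀ l0 a0,
      cexp p Y2g {ω | A0 ω = a0 ∧ L0 ω = l0}
        = ∑ l1, ∑ a1,
            μ12 l0 (g0 l0 a0) l1 (g1 l0 (g0 l0 a0) l1 a1)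
            * (pr p {ω | L1 ω = l1 ∧ L0 ω = l0 ∧ A0 ω = g0 l0 a0}
                / pr p {ω | L0 ω = l0 ∧ A0 ω = g0 l0 a0})
            * (pr p {ω | A1 ω = a1 ∧ L0 ω = l0 ∧ L1 ω = l1 ∧ A0 ω = g0 l0 a0}
                / pr p {ω | L0 ω = l0 ∧ L1 ω = l1 ∧ A0 ω = g0 l0 a0})) :
    ∀ l0 a0,
      cexp p (fun ω => Y2n ω - Y2g ω) {ω | A0 ω = a0 ∧ L0 ω = l0}
        = cexp p (fun ω => Y2 ω - γ12 l0 a0 (L1 ω) (A1 ω)) {ω | A0 ω = a0 ∧ L0 ω = l0}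
          - ∑ l1, ∑ a1,
              μ12 l0 (g0 l0 a0) l1 (g1 l0 (g0 l0 a0) l1 a1)
              * (pr p {ω | L1 ω = l1 ∧ L0 ω = l0 ∧ A0 ω = g0 l0 a0}
                  / pr p {ω | L0 ω = l0 ∧ A0 ω = g0 l0 a0})
              * (pr p {ω | A1 ω = a1 ∧ L0 ω = l0 ∧ L1 ω = l1 ∧ A0 ω = g0 l0 a0}
                  / pr p {ω | L0 ω = l0 ∧ L1 ω = l1 ∧ A0 ω = g0 l0 a0}) := by
  intro l0 a0
  rw [← hgform l0 a0]
  have hnum : ∀ X : Ω → ℝ,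
      num p X {ω | A0 ω = a0 ∧ L0 ω = l0}
      = ∑ l1, ∑ a1, num p X {ω | L0 ω = l0 ∧ A0 ω = a0 ∧ L1 ω = l1 ∧ A1 ω = a1} := by
    intro X
    refine num_split p X _ _ fun ω => ⟨L1 ω, A1 ω, fun h => ⟨h.2, h.1, rfl, rfl⟩, ?_⟩
    intro l1 a1 hm
    exact ⟨hm.2.2.1.symm, hm.2.2.2.symm, hm.2.1, hm.1⟩
  have hfine : ∀ l1 a1,
      num p Y2n {ω | L0 ω = l0 ∧ A0 ω = a0 ∧ L1 ω = l1 ∧ A1 ω = a1}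
      = num p (fun ω => Y2 ω - γ12 l0 a0 (L1 ω) (A1 ω))
          {ω | L0 ω = l0 ∧ A0 ω = a0 ∧ L1 ω = l1 ∧ A1 ω = a1} := by
    intro l1 a1
    have hright := num_congr p (fun ω => Y2 ω - γ12 l0 a0 (L1 ω) (A1 ω))
        (fun ω => Y2 ω - γ12 l0 a0 l1 a1)
        {ω | L0 ω = l0 ∧ A0 ω = a0 ∧ L1 ω = l1 ∧ A1 ω = a1}
        (fun ω hm => by simp only [hm.2.2.1, hm.2.2.2])
    rw [hright]
    by_cases hz : pr p {ω | L0 ω = l0 ∧ A0 ω = a0 ∧ L1 ω = l1 ∧ A1 ω = a1} = 0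
    · rw [num_empty p _ (not_mem_of_pr_zero hp hz),
          num_empty p _ (not_mem_of_pr_zero hp hz)]
    · have h1 := hblip1 l0 a0 l1 a1
      rw [cexp_eq, cexp_eq] at h1
      have h2 := congrArg
        (· * pr p {ω | L0 ω = l0 ∧ A0 ω = a0 ∧ L1 ω = l1 ∧ A1 ω = a1}) h1
      simpa [div_mul_cancel₀ _ hz] using h2
  have hnumeq :
      num p Y2n {ω | A0 ω = a0 ∧ L0 ω = l0}
      = num p (fun ω => Y2 ω - γ12 l0 a0 (L1 ω) (A1 ω)) {ω | A0 ω = a0 ∧ L0 ω = l0} := by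
    rw [hnum, hnum]
    exact Finset.sum_congr rfl fun l1 _ => Finset.sum_congr rfl fun a1 _ => hfine l1 a1
  rw [cexp_eq, cexp_eq, cexp_eq, num_sub p Y2n Y2g, hnumeq, sub_div]
end

section
/- Time-varying identification (mean-zero score): define backward recursively V_T = Y and V_t = mu_t(H_t, g_t(H_t,A_t)) where mu_t(h,a)=E[V_{t+1}|H_t=h,A_t=a]. If the blip model is correct, gamma_t(h,a;psi*) = mu_t(h,a) - mu_t(h, g_t(h,a)), then for any bounded q_t with adjoint pullback tilde q_t (satisfying E[q_t h(H_t,g_t(H_t,A_t))] = E[tilde q_t h(H_t,A_t)] for all bounded h), each summand phi_t = (q_t - tilde q_t){V_{t+1} - mu_t(H_t,A_t)} + q_t{mu_t(H_t,A_t) - mu_t(H_t,g_t(H_t,A_t)) - gamma_t(H_t,A_t;psi*)} has mean zero, and hence E[sum_t phi_t] = 0. -/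
open scoped Classical

lemma key14 {Ω ι 𝒜 : Type*} [Fintype Ω]
    (p : Ω → ℝ) (hp : ∀ ω, 0 < p ω)
    (H : Ω → ι) (A : Ω → 𝒜) (V : Ω → ℝ) (f : ι → 𝒜 → ℝ) :
    ∑ ω, p ω * (f (H ω) (A ω) *
      (V ω - cexp p V {ω' | H ω' = H ω ∧ A ω' = A ω})) = 0 := by
  classical
  set k : Ω → ι × 𝒜 := fun ω => (H ω, A ω) with hk
  rw [← Finset.sum_fiberwise_of_maps_to (g := k) (t := Finset.univ.image k)
       (fun x _ => Finset.mem_image_of_mem k (Finset.mem_univ x))]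
  apply Finset.sum_eq_zero
  intro b hb
  obtain ⟨ω₀, -, hω₀⟩ := Finset.mem_image.mp hb
  set S : Set Ω := {ω' | H ω' = b.1 ∧ A ω' = b.2} with hS
  have hmem : ∀ ω, ω ∈ S ↔ k ω = b := by
    intro ω; simp [hS, hk, Prod.ext_iff]
  have hpr : pr p S = ∑ ω ∈ Finset.univ.filter (fun ω => k ω = b), p ω := by
    rw [pr, Finset.sum_filter]
    refine Finset.sum_congr rfl fun ω _ => ?_
    by_cases h : k ω = b <;> simp [h, hmem ω]
  have hprpos : 0 < pr p S := by
    rw [hpr]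
    apply Finset.sum_pos (fun ω _ => hp ω)
    exact ⟨ω₀, by simp [hω₀]⟩
  have hnum : (∑ ω ∈ Finset.univ.filter (fun ω => k ω = b), p ω * V ω)
      = cexp p V S * pr p S := by
    rw [cexp, div_mul_cancel₀ _ (ne_of_gt hprpos), Finset.sum_filter]
    refine Finset.sum_congr rfl fun ω _ => ?_
    by_cases h : k ω = b <;> simp [h, hmem ω]
  have hterm : ∀ ω ∈ Finset.univ.filter (fun ω => k ω = b),
      p ω * (f (H ω) (A ω) * (V ω - cexp p V {ω' | H ω' = H ω ∧ A ω' = A ω}))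
        = f b.1 b.2 * (p ω * V ω - p ω * cexp p V S) := by
    intro ω hω
    have hkb : k ω = b := by simpa using hω
    have h1 : H ω = b.1 := congrArg Prod.fst hkb
    have h2 : A ω = b.2 := congrArg Prod.snd hkb
    rw [h1, h2, ← hS]; ring
  rw [Finset.sum_congr rfl hterm, ← Finset.mul_sum, Finset.sum_sub_distrib,
    ← Finset.sum_mul, hnum, ← hpr]
  ring

/-- Time-varying identification (mean-zero score): with backward-recursive
pseudo-outcomes `V T = Y`, `V t = μ_t(H_t, g_t(H_t,A_t))` where
`μ_t(h,a) = E[V_{t+1}|H_t=h,A_t=a]`, a correctly specified blip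
`γ_t(h,a;ψ*) = μ_t(h,a) - μ_t(h,g_t(h,a))`, and adjoint pullbacks `q̃_t` of
`q_t`, each summand
`φ_t = (q_t - q̃_t){V_{t+1} - μ_t(H_t,A_t)}
     + q_t{μ_t(H_t,A_t) - μ_t(H_t,g_t(H_t,A_t)) - γ_t(H_t,A_t;ψ*)}`
has mean zero, and hence `E[∑_t φ_t] = 0`. -/
theorem stmt14
    {Ω ι 𝒜 : Type*} [Fintype Ω]
    (p : Ω → ℝ) (hp : ∀ ω, 0 < p ω) (hp1 : ∑ ω, p ω = 1)
    (T : ℕ) (Y : Ω → ℝ)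
    (H : ℕ → Ω → ι) (A : ℕ → Ω → 𝒜) (g : ℕ → ι → 𝒜 → 𝒜)
    (V : ℕ → Ω → ℝ) (μ : ℕ → ι → 𝒜 → ℝ)
    (hVT : ∀ ω, V T ω = Y ω)
    (hμ : ∀ t < T, ∀ (h : ι) (a : 𝒜),
      μ t h a = cexp p (V (t+1)) {ω | H t ω = h ∧ A t ω = a})
    (hV : ∀ t < T, ∀ ω, V t ω = μ t (H t ω) (g t (H t ω) (A t ω)))
    (γ : ℕ → ι → 𝒜 → ℝ)
    (hγ : ∀ t < T, ∀ (h : ι) (a : 𝒜), γ t h a = μ t h a - μ t h (g t h a))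
    (q qt : ℕ → ι → 𝒜 → ℝ)
    (hadj : ∀ t < T, ∀ f : ι → 𝒜 → ℝ,
      ∑ ω, p ω * (q t (H t ω) (A t ω) * f (H t ω) (g t (H t ω) (A t ω)))
        = ∑ ω, p ω * (qt t (H t ω) (A t ω) * f (H t ω) (A t ω))) :
    (∀ t < T,
      ∑ ω, p ω *
        ((q t (H t ω) (A t ω) - qt t (H t ω) (A t ω))
            * (V (t+1) ω - μ t (H t ω) (A t ω))
          + q t (H t ω) (A t ω)
              * (μ t (H t ω) (A t ω) - μ t (H t ω) (g t (H t ω) (A t ω))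
                  - γ t (H t ω) (A t ω))) = 0) ∧
    (∑ ω, p ω * ∑ t ∈ Finset.range T,
        ((q t (H t ω) (A t ω) - qt t (H t ω) (A t ω))
            * (V (t+1) ω - μ t (H t ω) (A t ω))
          + q t (H t ω) (A t ω)
              * (μ t (H t ω) (A t ω) - μ t (H t ω) (g t (H t ω) (A t ω))
                  - γ t (H t ω) (A t ω))) = 0) := by
  have main : ∀ t < T,
      ∑ ω, p ω *
        ((q t (H t ω) (A t ω) - qt t (H t ω) (A t ω))
            * (V (t+1) ω - μ t (H t ω) (A t ω))
          + q t (H t ω) (A t ω)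
              * (μ t (H t ω) (A t ω) - μ t (H t ω) (g t (H t ω) (A t ω))
                  - γ t (H t ω) (A t ω))) = 0 := by
    intro t ht
    have := key14 p hp (H t) (A t) (V (t+1))
      (fun h a => q t h a - qt t h a)
    rw [← this]
    apply Finset.sum_congr rfl
    intro ω _
    rw [hγ t ht, hμ t ht]
    ring
  refine ⟨main, ?_⟩
  calc ∑ ω, p ω * ∑ t ∈ Finset.range T,
        ((q t (H t ω) (A t ω) - qt t (H t ω) (A t ω))
            * (V (t+1) ω - μ t (H t ω) (A t ω))
          + q t (H t ω) (A t ω)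
              * (μ t (H t ω) (A t ω) - μ t (H t ω) (g t (H t ω) (A t ω))
                  - γ t (H t ω) (A t ω)))
      = ∑ t ∈ Finset.range T, ∑ ω, p ω *
        ((q t (H t ω) (A t ω) - qt t (H t ω) (A t ω))
            * (V (t+1) ω - μ t (H t ω) (A t ω))
          + q t (H t ω) (A t ω)
              * (μ t (H t ω) (A t ω) - μ t (H t ω) (g t (H t ω) (A t ω))
                  - γ t (H t ω) (A t ω))) := by
        simp_rw [Finset.mul_sum]; exact Finset.sum_comm
    _ = 0 := Finset.sum_eq_zero fun t ht => main t (Finset.mem_range.mp ht)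
end

section
/- Neyman orthogonality of the time-varying score in mu_t: for each fixed t, with V_{t+1} held fixed, perturbing mu_{t,eps} = mu_t* + eps*dmu_t gives d/deps at 0 of E[phi_t] = -<q_t - tilde q_t, dmu_t>_{w_t} + <q_t, dmu_t>_{w_t} - <q_t, T_{g,t} dmu_t>_{w_t} = 0, where <u,v>_{w_t}=E[u(H_t,A_t)v(H_t,A_t)] (weighted by the true treatment law) and tilde q_t is the adjoint of T_{g,t}: <q_t, T_{g,t}h>_{w_t} = <tilde q_t, h>_{w_t}. -/
/-- Neyman orthogonality of the time-varying score in `μ_t`: with `V_{t+1}` held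
fixed, perturbing `μ_{t,ε} = μ_t* + ε·dμ_t` gives pathwise derivative
`-⟪q_t - q̃_t, dμ_t⟫ + ⟪q_t, dμ_t⟫ - ⟪q_t, T_{g,t} dμ_t⟫ = 0`, by the adjoint
property `⟪q_t, T_{g,t} h⟫ = ⟪q̃_t, h⟫`; equivalently
`E[q_t dμ(H_t,A_t)] - E[q_t dμ(H_t,g_t(H_t,A_t))] = E[(q_t - q̃_t) dμ(H_t,A_t)]`. -/
theorem stmt15
    {Ω ι 𝒜 : Type*} [Fintype Ω]
    (p : Ω → ℝ)
    (H : Ω → ι) (A : Ω → 𝒜) (g : ι → 𝒜 → 𝒜)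
    (q qt : ι → 𝒜 → ℝ)
    (hadj : ∀ h : ι → 𝒜 → ℝ,
      ∑ ω, p ω * (q (H ω) (A ω) * h (H ω) (g (H ω) (A ω)))
        = ∑ ω, p ω * (qt (H ω) (A ω) * h (H ω) (A ω))) :
    ∀ dμ : ι → 𝒜 → ℝ,
      (-(∑ ω, p ω * ((q (H ω) (A ω) - qt (H ω) (A ω)) * dμ (H ω) (A ω)))
        + (∑ ω, p ω * (q (H ω) (A ω) * dμ (H ω) (A ω)))
        - (∑ ω, p ω * (q (H ω) (A ω) * dμ (H ω) (g (H ω) (A ω)))) = 0)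
      ∧ ((∑ ω, p ω * (q (H ω) (A ω) * dμ (H ω) (A ω)))
          - (∑ ω, p ω * (q (H ω) (A ω) * dμ (H ω) (g (H ω) (A ω))))
          = ∑ ω, p ω * ((q (H ω) (A ω) - qt (H ω) (A ω)) * dμ (H ω) (A ω))) := by
  intro dμ
  have h := hadj dμ
  constructor <;> rw [h] <;> simp [Finset.sum_sub_distrib, sub_mul, mul_sub]
end
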